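/- arXiv:2111.15582 — 3 statements merged into one kernel-verified Lean document; each statement's English description precedes it below -/
import Mathlib

section
/- Let Λ ⊆ ℤ² be a lattice (free subgroup) of rank 2. Let (r₀,s₀) ∈ Λ be a nonzero vector with max{|r₀|,|s₀|} minimal, and let (r₁,s₁) be chosen so that v₀=(r₀,s₀), v₁=(r₁,s₁) form a basis of Λ with max{|r₁|,|s₁|} minimal among such completions. Set M = max{|r₀|,|s₀|,|r₁|,|s₁|}. Then there exists a basis v₀'=(r₀',s₀'), v₁'=(r₁',s₁') of Λ with all coordinates r₀',s₀',r₁',s₁' ≥ 0 and max{r₀',s₀',r₁',s₁'} ≤ 3M. -/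
/-- `v₀, v₁` form a basis of the subgroup `Λ` of `ℤ × ℤ`. -/
def IsLatticeBasis (Λ : AddSubgroup (ℤ × ℤ)) (v₀ v₁ : ℤ × ℤ) : Prop :=
  v₀ ∈ Λ ∧ v₁ ∈ Λ ∧ (∀ w ∈ Λ, ∃ m n : ℤ, w = m • v₀ + n • v₁) ∧
    ∀ m n : ℤ, m • v₀ + n • v₁ = 0 → m = 0 ∧ n = 0

/-- sup-norm of a vector in `ℤ × ℤ`. -/
def supNorm (v : ℤ × ℤ) : ℤ := max |v.1| |v.2|

/-!
After replacing `v₀, v₁` by `±v₀, ±v₁` both vectors lie in the upper half-plane. If both also have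
`x ≥ 0` we are done. If one of them, `u`, has `x < 0` while the other, `w`, lies in the first
quadrant, then `w` together with `±u + k w` for the least suitable `k ≥ 0` is a basis in the first
quadrant, of norm at most `2‖u‖ + ‖w‖`. If both have `x < 0`, replacing the one with the larger
`y`-coordinate by the sign-normalized difference of the two keeps the norm bound and lowers the sum
of the `y`-coordinates, so this case reduces to the others.
-/

lemma abs_le_supNorm (v : ℤ × ℤ) : |v.1| ≤ supNorm v ∧ |v.2| ≤ supNorm v :=
  max_le_iff.mp le_rfl

lemma supNorm_neg (v : ℤ × ℤ) : supNorm (-v) = supNorm v := by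
  simp [supNorm]

namespace IsLatticeBasis

variable {Λ : AddSubgroup (ℤ × ℤ)} {a b : ℤ × ℤ}

lemma symm (h : IsLatticeBasis Λ a b) : IsLatticeBasis Λ b a := by
  obtain ⟨ha, hb, hspan, hind⟩ := h
  refine ⟨hb, ha, fun w hw => ?_, fun m n hmn => (hind n m (by rwa [add_comm])).symm⟩
  obtain ⟨m, n, rfl⟩ := hspan w hw
  exact ⟨n, m, add_comm _ _⟩

lemma neg_left (h : IsLatticeBasis Λ a b) : IsLatticeBasis Λ (-a) b := by
  obtain ⟨ha, hb, hspan, hind⟩ := h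
  refine ⟨Λ.neg_mem ha, hb, fun w hw => ?_, fun m n hmn => ?_⟩
  · obtain ⟨m, n, rfl⟩ := hspan w hw
    exact ⟨-m, n, by module⟩
  · have := hind (-m) n (by rw [← hmn]; module)
    omega

lemma add_zsmul_left (h : IsLatticeBasis Λ a b) (k : ℤ) : IsLatticeBasis Λ (a + k • b) b := by
  obtain ⟨ha, hb, hspan, hind⟩ := h
  refine ⟨Λ.add_mem ha (Λ.zsmul_mem hb k), hb, fun w hw => ?_, fun m n hmn => ?_⟩
  · obtain ⟨m, n, rfl⟩ := hspan w hw
    exact ⟨m, n - m * k, by module⟩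
  · have := hind m (m * k + n) (by rw [← hmn]; module)
    constructor <;> grind

lemma sub_left (h : IsLatticeBasis Λ a b) : IsLatticeBasis Λ (a - b) b := by
  simpa [sub_eq_add_neg] using h.add_zsmul_left (-1)

lemma ne_zero_left (h : IsLatticeBasis Λ a b) : a ≠ 0 := by
  rintro rfl
  simpa using h.2.2.2 1 0 (by simp)

end IsLatticeBasis

/-- Every `v ≠ 0` has exactly one of `v`, `-v` in this half-plane. -/
def InUpperHalfPlane (v : ℤ × ℤ) : Prop := 0 < v.2 ∨ v.2 = 0 ∧ 0 < v.1

namespace InUpperHalfPlane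

variable {v : ℤ × ℤ}

lemma snd_nonneg (hv : InUpperHalfPlane v) : 0 ≤ v.2 := by
  rcases hv with h | h <;> omega

lemma snd_pos_of_fst_nonpos (hv : InUpperHalfPlane v) (h : v.1 ≤ 0) : 0 < v.2 := by
  rcases hv with h' | h' <;> omega

lemma ne_zero (hv : InUpperHalfPlane v) : v ≠ 0 := by
  rintro rfl
  rcases hv with h | h <;> simp at h

end InUpperHalfPlane

lemma exists_inUpperHalfPlane {v : ℤ × ℤ} (hv : v ≠ 0) :
    ∃ s : ℤ × ℤ, (s = v ∨ s = -v) ∧ InUpperHalfPlane s := by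
  have hv' : v.1 ≠ 0 ∨ v.2 ≠ 0 := by
    by_contra! hc
    exact hv (Prod.ext hc.1 hc.2)
  by_cases hpos : InUpperHalfPlane v
  · exact ⟨v, Or.inl rfl, hpos⟩
  · refine ⟨-v, Or.inr rfl, ?_⟩
    simp only [InUpperHalfPlane, Prod.snd_neg, Prod.fst_neg] at hpos ⊢
    omega

lemma IsLatticeBasis.exists_inUpperHalfPlane_left {Λ : AddSubgroup (ℤ × ℤ)} {a b : ℤ × ℤ}
    (h : IsLatticeBasis Λ a b) :
    ∃ a' : ℤ × ℤ, InUpperHalfPlane a' ∧ IsLatticeBasis Λ a' b ∧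
      supNorm a' = supNorm a ∧ a'.2 = |a.2| := by
  obtain ⟨a', rfl | rfl, ha'⟩ := exists_inUpperHalfPlane h.ne_zero_left
  · exact ⟨a', ha', h, rfl, (abs_of_nonneg ha'.snd_nonneg).symm⟩
  · refine ⟨-a, ha', h.neg_left, supNorm_neg a, ?_⟩
    have := ha'.snd_nonneg
    simp only [Prod.snd_neg] at this ⊢
    rw [abs_of_nonpos (by omega)]

def HasNonnegBasis (Λ : AddSubgroup (ℤ × ℤ)) (C : ℤ) : Prop :=
  ∃ v₀' v₁' : ℤ × ℤ, IsLatticeBasis Λ v₀' v₁' ∧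
    0 ≤ v₀'.1 ∧ 0 ≤ v₀'.2 ∧ 0 ≤ v₁'.1 ∧ 0 ≤ v₁'.2 ∧
    max (supNorm v₀') (supNorm v₁') ≤ C

namespace HasNonnegBasis

variable {Λ : AddSubgroup (ℤ × ℤ)} {C D : ℤ}

lemma mono (h : HasNonnegBasis Λ C) (hCD : C ≤ D) : HasNonnegBasis Λ D := by
  obtain ⟨a, b, hab, ha1, ha2, hb1, hb2, hC⟩ := h
  exact ⟨a, b, hab, ha1, ha2, hb1, hb2, hC.trans hCD⟩

lemma of_le {a b : ℤ × ℤ} (h : IsLatticeBasis Λ a b)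
    (ha1 : 0 ≤ a.1) (ha2 : 0 ≤ a.2) (hb1 : 0 ≤ b.1) (hb2 : 0 ≤ b.2)
    (ha1C : a.1 ≤ C) (ha2C : a.2 ≤ C) (hb1C : b.1 ≤ C) (hb2C : b.2 ≤ C) :
    HasNonnegBasis Λ C := by
  refine ⟨a, b, h, ha1, ha2, hb1, hb2, ?_⟩
  simp only [supNorm, abs_of_nonneg, ha1, ha2, hb1, hb2, max_le_iff]
  exact ⟨⟨ha1C, ha2C⟩, hb1C, hb2C⟩

end HasNonnegBasis

lemma exists_lt_mul_le_add {x y : ℤ} (hx : 0 ≤ x) (hy : 0 < y) :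
    ∃ k : ℤ, 0 ≤ k ∧ x < k * y ∧ k * y ≤ x + y := by
  refine ⟨x / y + 1, by have := Int.ediv_nonneg hx hy.le; omega,
    Int.lt_ediv_add_one_mul_self x hy, ?_⟩
  have := Int.ediv_mul_le x hy.ne'
  linarith

lemma IsLatticeBasis.hasNonnegBasis_of_fst_neg {Λ : AddSubgroup (ℤ × ℤ)} {u w : ℤ × ℤ}
    (h : IsLatticeBasis Λ u w) (hu1 : u.1 < 0) (hu2 : 0 ≤ u.2)
    (hw1 : 0 ≤ w.1) (hw2 : 0 ≤ w.2) (hw0 : w ≠ 0) :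
    HasNonnegBasis Λ (2 * supNorm u + supNorm w) := by
  obtain ⟨hu1N, hu2N⟩ := abs_le_supNorm u
  obtain ⟨hw1N, hw2N⟩ := abs_le_supNorm w
  rw [abs_le] at hu1N hu2N hw1N hw2N
  rcases le_or_gt w.1 w.2 with hsteep | hflat
  · have hw2pos : 0 < w.2 := by
      by_contra!
      exact hw0 (Prod.ext (by simp; omega) (by simp; omega))
    obtain ⟨k, hk, hlt, hle⟩ := exists_lt_mul_le_add hu2 hw2pos
    have hkw : k * w.1 ≤ k * w.2 := mul_le_mul_of_nonneg_left hsteep hk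
    have hkw1 : 0 ≤ k * w.1 := mul_nonneg hk hw1
    have hc1 : (-u + k • w).1 = -u.1 + k * w.1 := by simp
    have hc2 : (-u + k • w).2 = -u.2 + k * w.2 := by simp
    refine HasNonnegBasis.of_le (h.neg_left.add_zsmul_left k).symm ?_ ?_ ?_ ?_ ?_ ?_ ?_ ?_ <;>
      linarith
  · have hw1pos : 0 < w.1 := by omega
    obtain ⟨k, hk, hlt, hle⟩ := exists_lt_mul_le_add (neg_nonneg.mpr hu1.le) hw1pos
    have hkw : k * w.2 ≤ k * w.1 := mul_le_mul_of_nonneg_left hflat.le hk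
    have hkw2 : 0 ≤ k * w.2 := mul_nonneg hk hw2
    have hc1 : (u + k • w).1 = u.1 + k * w.1 := by simp
    have hc2 : (u + k • w).2 = u.2 + k * w.2 := by simp
    refine HasNonnegBasis.of_le (h.add_zsmul_left k).symm ?_ ?_ ?_ ?_ ?_ ?_ ?_ ?_ <;> linarith

lemma IsLatticeBasis.exists_inUpperHalfPlane_sub_left {Λ : AddSubgroup (ℤ × ℤ)} {a b : ℤ × ℤ}
    (h : IsLatticeBasis Λ a b) (ha1 : a.1 < 0) (hb1 : b.1 < 0) (hba : b.2 ≤ a.2) (hb2 : 0 ≤ b.2) :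
    ∃ d : ℤ × ℤ, InUpperHalfPlane d ∧ IsLatticeBasis Λ d b ∧
      supNorm d ≤ max (supNorm a) (supNorm b) ∧ d.2 = a.2 - b.2 := by
  obtain ⟨d, hd, hdb, hdN, hd2⟩ := h.sub_left.exists_inUpperHalfPlane_left
  refine ⟨d, hd, hdb, ?_, by rw [hd2, Prod.snd_sub, abs_of_nonneg (by omega)]⟩
  obtain ⟨ha1N, ha2N⟩ := abs_le_supNorm a
  obtain ⟨hb1N, hb2N⟩ := abs_le_supNorm b
  rw [abs_le] at ha1N ha2N hb1N hb2N
  rw [hdN, supNorm, Prod.fst_sub, Prod.snd_sub, max_le_iff, abs_le, abs_le]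
  have := le_max_left (supNorm a) (supNorm b)
  have := le_max_right (supNorm a) (supNorm b)
  refine ⟨⟨?_, ?_⟩, ?_, ?_⟩ <;> linarith

theorem IsLatticeBasis.hasNonnegBasis_of_inUpperHalfPlane {Λ : AddSubgroup (ℤ × ℤ)}
    {a b : ℤ × ℤ} (h : IsLatticeBasis Λ a b) (ha : InUpperHalfPlane a)
    (hb : InUpperHalfPlane b) : HasNonnegBasis Λ (3 * max (supNorm a) (supNorm b)) := by
  have := le_max_left (supNorm a) (supNorm b)
  have := le_max_right (supNorm a) (supNorm b)
  rcases le_or_gt 0 a.1 with ha1 | ha1 <;> rcases le_or_gt 0 b.1 with hb1 | hb1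
  · obtain ⟨ha1N, ha2N⟩ := abs_le_supNorm a
    obtain ⟨hb1N, hb2N⟩ := abs_le_supNorm b
    have hN : 0 ≤ supNorm a := (abs_nonneg _).trans ha1N
    rw [abs_le] at ha1N ha2N hb1N hb2N
    refine HasNonnegBasis.of_le h ha1 ha.snd_nonneg hb1 hb.snd_nonneg ?_ ?_ ?_ ?_ <;> linarith
  · exact (h.symm.hasNonnegBasis_of_fst_neg hb1 hb.snd_nonneg ha1 ha.snd_nonneg ha.ne_zero).mono
      (by linarith)
  · exact (h.hasNonnegBasis_of_fst_neg ha1 ha.snd_nonneg hb1 hb.snd_nonneg hb.ne_zero).mono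
      (by linarith)
  · have ha2 := ha.snd_pos_of_fst_nonpos ha1.le
    have hb2 := hb.snd_pos_of_fst_nonpos hb1.le
    rcases le_total b.2 a.2 with hba | hab
    · obtain ⟨d, hd, hdb, hdN, hd2⟩ := h.exists_inUpperHalfPlane_sub_left ha1 hb1 hba hb2.le
      exact (hdb.hasNonnegBasis_of_inUpperHalfPlane hd hb).mono (by grind)
    · obtain ⟨d, hd, hda, hdN, hd2⟩ := h.symm.exists_inUpperHalfPlane_sub_left hb1 ha1 hab ha2.le
      exact (hda.symm.hasNonnegBasis_of_inUpperHalfPlane ha hd).mono (by grind)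
termination_by (a.2 + b.2).toNat
decreasing_by all_goals omega

theorem stmt0_general (Λ : AddSubgroup (ℤ × ℤ)) (v₀ v₁ : ℤ × ℤ)
    (hbasis : IsLatticeBasis Λ v₀ v₁)
    (M : ℤ) (hM : M = max (supNorm v₀) (supNorm v₁)) :
    ∃ v₀' v₁' : ℤ × ℤ, IsLatticeBasis Λ v₀' v₁' ∧
      0 ≤ v₀'.1 ∧ 0 ≤ v₀'.2 ∧ 0 ≤ v₁'.1 ∧ 0 ≤ v₁'.2 ∧
      max (supNorm v₀') (supNorm v₁') ≤ 3 * M := by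
  obtain ⟨a, ha, hab, haN, -⟩ := hbasis.exists_inUpperHalfPlane_left
  obtain ⟨b, hb, hba, hbN, -⟩ := hab.symm.exists_inUpperHalfPlane_left
  have := hba.symm.hasNonnegBasis_of_inUpperHalfPlane ha hb
  rwa [haN, hbN, ← hM] at this

theorem stmt0 (Λ : AddSubgroup (ℤ × ℤ)) (v₀ v₁ : ℤ × ℤ)
    (hv₀ : v₀ ∈ Λ) (hv₀ne : v₀ ≠ 0)
    (hv₀min : ∀ w ∈ Λ, w ≠ 0 → supNorm v₀ ≤ supNorm w)
    (hbasis : IsLatticeBasis Λ v₀ v₁)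
    (hv₁min : ∀ w : ℤ × ℤ, IsLatticeBasis Λ v₀ w → supNorm v₁ ≤ supNorm w)
    (M : ℤ) (hM : M = max (supNorm v₀) (supNorm v₁)) :
    ∃ v₀' v₁' : ℤ × ℤ, IsLatticeBasis Λ v₀' v₁' ∧
      0 ≤ v₀'.1 ∧ 0 ≤ v₀'.2 ∧ 0 ≤ v₁'.1 ∧ 0 ≤ v₁'.2 ∧
      max (supNorm v₀') (supNorm v₁') ≤ 3 * M :=
  stmt0_general Λ v₀ v₁ hbasis M hM
end

section
/- Let Λ ⊆ ℤ² be a rank-2 lattice, and let v₀=(r₀,s₀), v₁=(r₁,s₁) be a basis with v₀ of minimal sup-norm among nonzero vectors of Λ and v₁ of minimal sup-norm among vectors completing v₀ to a basis. Then it is impossible that all four coordinates are nonzero with r₀,r₁ > 0 and s₀,s₁ < 0 (i.e., the coordinates of both basis vectors cannot have strictly opposite signs in the same pattern). -/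
theorem abs_sub_lt_of_mul_pos_of_abs_le {α : Type*} [CommRing α] [LinearOrder α]
    [IsStrictOrderedRing α] {a b M : α} (hab : 0 < a * b) (ha : |a| ≤ M) (hb : |b| ≤ M) :
    |b - a| < M := by
  obtain ⟨ha₁, ha₂⟩ := abs_le.mp ha
  obtain ⟨hb₁, hb₂⟩ := abs_le.mp hb
  rw [abs_lt]
  rcases pos_and_pos_or_neg_and_neg_of_mul_pos hab with ⟨ha', hb'⟩ | ⟨ha', hb'⟩ <;>
    constructor <;> linarith

theorem supNorm_sub_lt_of_mul_pos {v w : ℤ × ℤ} (h₁ : 0 < v.1 * w.1) (h₂ : 0 < v.2 * w.2)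
    (hvw : supNorm v ≤ supNorm w) : supNorm (w - v) < supNorm w :=
  max_lt
    (abs_sub_lt_of_mul_pos_of_abs_le h₁ ((le_max_left _ _).trans hvw) (le_max_left _ _))
    (abs_sub_lt_of_mul_pos_of_abs_le h₂ ((le_max_right _ _).trans hvw) (le_max_right _ _))

theorem IsLatticeBasis.sub_zsmul {Λ : AddSubgroup (ℤ × ℤ)} {v₀ v₁ : ℤ × ℤ}
    (h : IsLatticeBasis Λ v₀ v₁) (k : ℤ) : IsLatticeBasis Λ v₀ (v₁ - k • v₀) := by
  obtain ⟨h₀, h₁, hspan, hindep⟩ := h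
  refine ⟨h₀, Λ.sub_mem h₁ (Λ.zsmul_mem h₀ k), fun w hw => ?_, fun m n hmn => ?_⟩
  · obtain ⟨m, n, rfl⟩ := hspan w hw
    exact ⟨m + n * k, n, by rw [add_smul, smul_sub, mul_smul]; abel⟩
  · have h' : (m - n * k) • v₀ + n • v₁ = 0 := by
      rw [← hmn, sub_smul, smul_sub, mul_smul]; abel
    obtain ⟨hm, rfl⟩ := hindep _ _ h'
    simpa using hm

theorem stmt1_general (Λ : AddSubgroup (ℤ × ℤ)) (v₀ v₁ : ℤ × ℤ)
    (hv₀min : ∀ w ∈ Λ, w ≠ 0 → supNorm v₀ ≤ supNorm w)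
    (hbasis : IsLatticeBasis Λ v₀ v₁)
    (hv₁min : ∀ w : ℤ × ℤ, IsLatticeBasis Λ v₀ w → supNorm v₁ ≤ supNorm w) :
    ¬(0 < v₀.1 ∧ 0 < v₁.1 ∧ v₀.2 < 0 ∧ v₁.2 < 0) := by
  rintro ⟨hr₀, hr₁, hs₀, hs₁⟩
  have hv₁ne : v₁ ≠ 0 := fun h => hr₁.ne' (by simp [h])
  have hshorter : supNorm (v₁ - v₀) < supNorm v₁ :=
    supNorm_sub_lt_of_mul_pos (mul_pos hr₀ hr₁) (mul_pos_of_neg_of_neg hs₀ hs₁)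
      (hv₀min v₁ hbasis.2.1 hv₁ne)
  have hbasis' : IsLatticeBasis Λ v₀ (v₁ - v₀) := by simpa using hbasis.sub_zsmul 1
  exact (hv₁min _ hbasis').not_gt hshorter

theorem stmt1 (Λ : AddSubgroup (ℤ × ℤ)) (v₀ v₁ : ℤ × ℤ)
    (hv₀ : v₀ ∈ Λ) (hv₀ne : v₀ ≠ 0)
    (hv₀min : ∀ w ∈ Λ, w ≠ 0 → supNorm v₀ ≤ supNorm w)
    (hbasis : IsLatticeBasis Λ v₀ v₁)
    (hv₁min : ∀ w : ℤ × ℤ, IsLatticeBasis Λ v₀ w → supNorm v₁ ≤ supNorm w) :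
    ¬(0 < v₀.1 ∧ 0 < v₁.1 ∧ v₀.2 < 0 ∧ v₁.2 < 0) :=
  stmt1_general Λ v₀ v₁ hv₀min hbasis hv₁min
end

section
/- Let S be a finite set of places of ℚ (possibly including the archimedean place) and let ε > 0. Then there exist a rational linear fractional transformation ψ (invertible Möbius map with rational coefficients) and integers M ≥ 1, A, B such that: whenever t ∈ ℚ and ψ(t) = a/b with a, b positive integers satisfying a ≡ A (mod M) and b ≡ B (mod M), we have |t|_v < ε for every v ∈ S. -/
/-!
Take `ψ(t) = (1 - N t) / (N t)`, whose inverse sends `a / b` to `t = b / (N (a + b))`,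
where `N = Q ^ (n + 1)` for `Q = 2 ∏_{p ∈ S} p`, and impose `a ≡ 1`, `b ≡ 0` modulo `M = N²`.
Archimedean: `0 < t < 1 / N`. At `p ∈ S`: `a + b ≡ 1 (mod p)` is a `p`-adic unit and
`N² ∣ b`, so `|t|_p ≤ |N|_p ≤ 2⁻⁽ⁿ⁺¹⁾`.
-/

lemma padicNorm_int_le_of_dvd {p : ℕ} [Fact p.Prime] {m z : ℤ} (h : m ∣ z) :
    padicNorm p z ≤ padicNorm p m := by
  obtain ⟨k, rfl⟩ := h
  rw [Int.cast_mul, padicNorm.mul]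
  exact mul_le_of_le_one_right (padicNorm.nonneg _) (padicNorm.of_int k)

lemma padicNorm_pow_le_inv_two_pow {p : ℕ} [hp : Fact p.Prime] {Q : ℤ} (hpQ : (p : ℤ) ∣ Q)
    (n : ℕ) : padicNorm p ((Q ^ n : ℤ) : ℚ) ≤ 2⁻¹ ^ n := by
  have hQ : padicNorm p Q ≤ 2⁻¹ :=
    calc padicNorm p Q ≤ padicNorm p (p : ℤ) := padicNorm_int_le_of_dvd hpQ
      _ = (p : ℚ)⁻¹ := by exact_mod_cast padicNorm.padicNorm_p_of_prime
      _ ≤ 2⁻¹ := inv_anti₀ two_pos (by exact_mod_cast hp.out.two_le)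
  rw [Int.cast_pow, IsAbsoluteValue.abv_pow (padicNorm p)]
  exact pow_le_pow_left₀ (padicNorm.nonneg _) hQ n

lemma eq_div_mul_add_of_div_eq_div {N t a b : ℚ} (ha : 0 < a) (hb : 0 < b)
    (h : (-N * t + 1) / (N * t) = a / b) : t = b / (N * (a + b)) := by
  have hNt : N * t ≠ 0 := by
    rintro h0
    rw [h0, div_zero] at h
    exact (div_pos ha hb).ne h
  rw [div_eq_div_iff hNt hb.ne'] at h
  rw [eq_div_iff (mul_ne_zero (left_ne_zero_of_mul hNt) (by positivity))]
  linear_combination -h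

lemma abs_div_mul_add_lt_inv {N a b : ℚ} (hN : 0 < N) (ha : 0 < a) (hb : 0 < b) :
    |b / (N * (a + b))| < N⁻¹ := by
  rw [abs_of_pos (by positivity), div_lt_iff₀ (by positivity), inv_mul_cancel_left₀ hN.ne']
  linarith

lemma padicNorm_div_mul_add_le {p : ℕ} [hp : Fact p.Prime] {N K a b : ℤ} (hpK : (p : ℤ) ∣ K)
    (ha : a ≡ 1 [ZMOD N * K]) (hb : b ≡ 0 [ZMOD N * K]) :
    padicNorm p (b / (N * (a + b))) ≤ padicNorm p K := by
  have hunit : padicNorm p ((a + b : ℤ) : ℚ) = 1 := by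
    refine (padicNorm.int_eq_one_iff _).mpr fun hpab => ?_
    have hpNK : (p : ℤ) ∣ N * K := hpK.mul_left N
    have hp1 : (p : ℤ) ∣ (a + b) - ((a + b) - (1 + 0)) :=
      dvd_sub hpab (hpNK.trans (ha.add hb).symm.dvd)
    exact (Nat.prime_iff_prime_int.mp hp.out).not_dvd_one (by simpa using hp1)
  have hbK : padicNorm p b ≤ padicNorm p K * padicNorm p N := by
    rw [← padicNorm.mul, mul_comm]
    exact_mod_cast padicNorm_int_le_of_dvd (Int.modEq_zero_iff_dvd.mp hb)
  rw [← Int.cast_add, padicNorm.div, padicNorm.mul, hunit, mul_one]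
  exact div_le_of_le_mul₀ (padicNorm.nonneg _) (padicNorm.nonneg _) hbK

/-- A finite set of places of ℚ, given by a finite set of primes together with a flag
indicating whether the archimedean place is included. Statement of Lemma on
linear fractional transformations controlling places. -/
theorem stmt3 (S : Finset ℕ) (hS : ∀ p ∈ S, p.Prime) (arch : Bool)
    (ε : ℚ) (hε : 0 < ε) :
    ∃ (α β γ δ : ℚ) (M A B : ℤ), 1 ≤ M ∧ α * δ - β * γ ≠ 0 ∧
      ∀ (t : ℚ) (a b : ℤ), 0 < a → 0 < b →
        a ≡ A [ZMOD M] → b ≡ B [ZMOD M] →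
        (α * t + β) / (γ * t + δ) = (a : ℚ) / b →
        (∀ p ∈ S, padicNorm p t < ε) ∧ (arch = true → |t| < ε) := by
  obtain ⟨n, hn⟩ := exists_pow_lt_of_lt_one hε (by norm_num : (2⁻¹ : ℚ) < 1)
  have hnε : (2⁻¹ : ℚ) ^ (n + 1) < ε :=
    (pow_le_pow_of_le_one (by norm_num) (by norm_num) n.le_succ).trans_lt hn
  set Q : ℤ := 2 * ∏ p ∈ S, (p : ℤ)
  have hQ : 2 ≤ Q := by
    have : 0 < ∏ p ∈ S, (p : ℤ) := Finset.prod_pos fun p hp => by exact_mod_cast (hS p hp).pos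
    omega
  set N : ℤ := Q ^ (n + 1)
  have hN : 1 ≤ N := one_le_pow₀ (by omega)
  refine ⟨-N, 1, N, 0, N * N, 1, 0, one_le_mul_of_one_le_of_one_le hN hN, ?_, ?_⟩
  · simpa using (show (0 : ℚ) < N by exact_mod_cast hN).ne'
  intro t a b ha hb hA hB h
  rw [add_zero] at h
  have ha' : (0 : ℚ) < a := by exact_mod_cast ha
  have hb' : (0 : ℚ) < b := by exact_mod_cast hb
  have ht := eq_div_mul_add_of_div_eq_div ha' hb' h
  refine ⟨fun p hp => ?_, fun _ => ?_⟩
  · have := Fact.mk (hS p hp)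
    have hpQ : (p : ℤ) ∣ Q := (Finset.dvd_prod_of_mem _ hp).mul_left 2
    calc padicNorm p t ≤ padicNorm p N :=
          ht ▸ padicNorm_div_mul_add_le (dvd_pow hpQ n.succ_ne_zero) hA hB
      _ ≤ 2⁻¹ ^ (n + 1) := padicNorm_pow_le_inv_two_pow hpQ _
      _ < ε := hnε
  · calc |t| < (N : ℚ)⁻¹ := ht ▸ abs_div_mul_add_lt_inv (by exact_mod_cast hN) ha' hb'
      _ ≤ 2⁻¹ ^ (n + 1) := by
        rw [Int.cast_pow, ← inv_pow]
        exact pow_le_pow_left₀ (by positivity) (inv_anti₀ two_pos (by exact_mod_cast hQ)) _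
      _ < ε := hnε
end
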